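/- arXiv:math/9610219 — 3 statements merged into one kernel-verified Lean document; each statement's English description precedes it below -/
import Mathlib

section
/- For every countable ordinal α with α > 0, the topology τ_α on A_α has no isolated points. -/
open Set

/-- A subtree of `ω^{<ω}`: a set of finite sequences of naturals closed under
initial segments (prefixes). -/
def IsTree (T : Set (List ℕ)) : Prop := ∀ s ∈ T, ∀ t : List ℕ, t <+: s → t ∈ T

/-- `T` has an infinite branch. -/
def HasInfiniteBranch (T : Set (List ℕ)) : Prop :=
  ∃ x : ℕ → ℕ, ∀ n : ℕ, (List.range n).map x ∈ T

/-- A well-founded tree: a subtree of `ω^{<ω}` with no infinite branch. -/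
def IsWFTree (T : Set (List ℕ)) : Prop := IsTree T ∧ ¬ HasInfiniteBranch T

/-- The child relation of `T`: `childRel T s t` iff `s = t⌢⟨m⟩ ∈ T` for some `m`. -/
def childRel (T : Set (List ℕ)) (s t : List ℕ) : Prop := s ∈ T ∧ ∃ m : ℕ, s = t ++ [m]

/-- The canonical rank function of a well-founded tree:
`h_T ν = sup { h_T (ν⌢⟨m⟩) + 1 : ν⌢⟨m⟩ ∈ T }`. -/
noncomputable def treeRank (T : Set (List ℕ)) (ν : List ℕ) : Ordinal :=
  @dite _ (WellFounded (childRel T)) (Classical.dec _) (fun h => (h.apply ν).rank) (fun _ => 0)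

/-- `A_α`: the well-founded trees containing `⟨⟩` whose canonical rank at `⟨⟩` is `α`. -/
def Atree (α : Ordinal) : Set (Set (List ℕ)) :=
  {T | IsWFTree T ∧ [] ∈ T ∧ treeRank T [] = α}

/-- `n^{≤ n}`: the finite sequences of length at most `n` with all entries `< n`. -/
def seqBelow (n : ℕ) : Set (List ℕ) := {l | l.length ≤ n ∧ ∀ x ∈ l, x < n}

/-- The basic τ_α-open set `U(n,T)` determined by `n ∈ ℕ` and `T ∈ A_α`. -/
def Unbhd (α : Ordinal) (n : ℕ) (T : ↥(Atree α)) : Set (↥(Atree α)) :=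
  {T' | T'.1 ∩ seqBelow n = T.1 ∩ seqBelow n ∧
    ∀ ν ∈ T.1 ∩ seqBelow n, treeRank T'.1 ν = treeRank T.1 ν}

/-- The topology `τ_α` on `A_α`, generated by the sets `U(n,T)`. -/
def tauTop (α : Ordinal) : TopologicalSpace ↥(Atree α) :=
  TopologicalSpace.generateFrom {s | ∃ (n : ℕ) (T : ↥(Atree α)), s = Unbhd α n T}

/-!
Given `T ∈ A_α` and `n`, we change `T` only inside the cone above a root child `⟨m⟩` with
`m ≥ n`. No nonempty node of `n^{≤n}` lies in or below that cone, and the rank of a node depends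
only on the tree above it, so `T ∩ n^{≤n}` and the ranks there survive; the root keeps rank `α`
by the choice of the change. If some `⟨m⟩` with `m ≥ n` is missing from `T`, add it as a leaf:
it contributes `0 + 1 ≤ α` to the supremum defining the root rank. Otherwise deleting the cone
above one of `⟨n⟩`, `⟨n + 1⟩` keeps that supremum: if `⟨n⟩` does not attain it, the other
children still reach it; if it does, delete above `⟨n + 1⟩`.
-/

universe u

theorem Ordinal.exists_forall_lt_iSup_exists_ne {ι : Type u} {f : ι → Ordinal.{u}} {i₁ i₂ : ι}
    (h : i₁ ≠ i₂) : ∃ i, (i = i₁ ∨ i = i₂) ∧ ∀ β < ⨆ j, f j, ∃ j ≠ i, β < f j := by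
  by_cases hlt : f i₁ < ⨆ j, f j
  · refine ⟨i₁, Or.inl rfl, fun β hβ => ?_⟩
    obtain ⟨j, hj⟩ := Ordinal.lt_iSup_iff.mp (max_lt hβ hlt)
    exact ⟨j, fun hji => (hji ▸ hj).not_ge (le_max_right _ _), (le_max_left _ _).trans_lt hj⟩
  · exact ⟨i₂, Or.inr rfl, fun β hβ => ⟨i₁, h, hβ.trans_le (not_lt.mp hlt)⟩⟩

theorem IsWFTree.wellFounded_childRel {T : Set (List ℕ)} (hT : IsWFTree T) :
    WellFounded (childRel T) := by
  refine wellFounded_iff_isEmpty_descending_chain.mpr ⟨fun ⟨f, hf⟩ => hT.2 ?_⟩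
  have hprefix : ∀ ⦃a b⦄, a ≤ b → f a <+: f b :=
    Nat.rel_of_forall_rel_succ_of_le (· <+: ·) fun k => by
      obtain ⟨_, m, hm⟩ := hf k
      exact hm ▸ List.prefix_append _ _
  have hlength : ∀ k, k ≤ (f k).length := by
    intro k
    induction k with
    | zero => exact Nat.zero_le _
    | succ k ih =>
      obtain ⟨_, m, hm⟩ := hf k
      simpa [hm] using ih
  refine ⟨fun i => (f (i + 1)).getD i 0, fun p => ?_⟩
  have htake : (List.range p).map (fun i => (f (i + 1)).getD i 0) = (f p).take p := by
    refine List.ext_getElem (by simp [hlength p]) fun i hi _ => ?_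
    have hi' : i < (f (i + 1)).length := hlength (i + 1)
    simp only [List.getElem_map, List.getElem_range, List.getElem_take,
      List.getD_eq_getElem _ _ hi']
    exact (hprefix (by simpa using hi)).getElem hi'
  rw [htake]
  exact hT.1 _ (hf p).1 _ ((List.take_prefix _ _).trans (hprefix p.le_succ))

theorem treeRank_eq_iSup {T : Set (List ℕ)} (hT : WellFounded (childRel T)) (ν : List ℕ) :
    treeRank T ν = ⨆ m : {m // ν ++ [m] ∈ T}, Order.succ (treeRank T (ν ++ [m.1])) := by
  have hrank : ∀ μ, treeRank T μ = (hT.apply μ).rank := fun _ => dif_pos hT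
  rw [hrank, Acc.rank_eq]
  refine (Function.Surjective.iSup_comp (f := fun m : {m // ν ++ [m] ∈ T} =>
    (⟨ν ++ [m.1], m.2, m.1, rfl⟩ : {b // childRel T b ν})) ?_ _).symm.trans ?_
  · rintro ⟨b, hb, m, rfl⟩
    exact ⟨⟨m, hb⟩, rfl⟩
  · simp only [hrank]

theorem treeRank_append_lt {T : Set (List ℕ)} (hT : WellFounded (childRel T)) {ν : List ℕ}
    {m : ℕ} (h : ν ++ [m] ∈ T) : treeRank T (ν ++ [m]) < treeRank T ν := by
  rw [treeRank_eq_iSup hT ν, Ordinal.lt_iSup_iff]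
  exact ⟨⟨m, h⟩, Order.lt_succ _⟩

theorem treeRank_le_of_forall_prefix_mem {T T' : Set (List ℕ)} (hT : WellFounded (childRel T))
    (hT' : WellFounded (childRel T')) {ν : List ℕ} (h : ∀ s, ν <+: s → s ∈ T → s ∈ T') :
    treeRank T ν ≤ treeRank T' ν := by
  induction ν using hT.induction with
  | _ ν ih =>
    rw [treeRank_eq_iSup hT]
    refine Ordinal.iSup_le fun ⟨m, hm⟩ => Order.succ_le_of_lt ?_
    have hchild : ν <+: ν ++ [m] := List.prefix_append _ _
    calc treeRank T (ν ++ [m]) ≤ treeRank T' (ν ++ [m]) :=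
          ih _ ⟨hm, m, rfl⟩ fun s hs => h s (hchild.trans hs)
      _ < treeRank T' ν := treeRank_append_lt hT' (h _ hchild hm)

theorem treeRank_congr {T T' : Set (List ℕ)} (hT : WellFounded (childRel T))
    (hT' : WellFounded (childRel T')) {ν : List ℕ} (h : ∀ s, ν <+: s → (s ∈ T ↔ s ∈ T')) :
    treeRank T ν = treeRank T' ν :=
  (treeRank_le_of_forall_prefix_mem hT hT' fun s hs => (h s hs).1).antisymm
    (treeRank_le_of_forall_prefix_mem hT' hT fun s hs => (h s hs).2)

theorem IsWFTree.mono {S T : Set (List ℕ)} (hT : IsWFTree T) (hS : IsTree S) (hST : S ⊆ T) :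
    IsWFTree S :=
  ⟨hS, fun ⟨x, hx⟩ => hT.2 ⟨x, fun p => hST (hx p)⟩⟩

theorem IsWFTree.insert_singleton {T : Set (List ℕ)} (hT : IsWFTree T) (hnil : [] ∈ T) (m : ℕ) :
    IsWFTree (insert [m] T) := by
  refine ⟨?_, fun ⟨x, hx⟩ => hT.2 ⟨x, fun p => ?_⟩⟩
  · rintro s (rfl | hs) t hts
    · rcases List.prefix_cons_iff.mp hts with rfl | ⟨_, rfl, ht⟩
      · exact Or.inr hnil
      · exact Or.inl (by rw [List.prefix_nil.mp ht])
    · exact Or.inr (hT.1 s hs t hts)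
  · -- the branch passes through `[m]` only at length one, so its longer initial segments lie in `T`
    have hlong : (List.range (p + 2)).map x ∈ T :=
      (hx (p + 2)).resolve_left fun h => by simpa using congrArg List.length h
    refine hT.1 _ hlong _ ?_
    simpa [List.take_range] using (List.take_prefix p (List.range (p + 2))).map x

def cone (c : List ℕ) : Set (List ℕ) := {s | c <+: s}

theorem IsTree.diff_cone {T : Set (List ℕ)} (hT : IsTree T) (c : List ℕ) : IsTree (T \ cone c) :=
  fun s hs t hts => ⟨hT s hs.1 t hts, fun hct => hs.2 (hct.trans hts)⟩

theorem treeRank_insert_singleton_nil {T : Set (List ℕ)} (hT : IsWFTree T) (hnil : [] ∈ T)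
    {m : ℕ} (hm : [m] ∉ T) (hpos : 0 < treeRank T []) :
    treeRank (insert [m] T) [] = treeRank T [] := by
  have hT' := hT.insert_singleton hnil m
  have hwf := hT.wellFounded_childRel
  have hwf' := hT'.wellFounded_childRel
  refine le_antisymm ?_ (treeRank_le_of_forall_prefix_mem hwf hwf' fun s _ => Or.inr)
  rw [treeRank_eq_iSup hwf']
  refine Ordinal.iSup_le fun ⟨j, hj⟩ => Order.succ_le_of_lt ?_
  simp only [List.nil_append] at hj ⊢
  rcases hj with hjm | hjT
  · have hleaf : treeRank (insert [m] T) [m] ≤ 0 := by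
      rw [treeRank_eq_iSup hwf']
      refine Ordinal.iSup_le fun ⟨k, hk⟩ => ?_
      rcases hk with hk | hk
      · simp at hk
      · exact absurd (hT.1 _ hk _ (List.prefix_append _ _)) hm
    simpa [hjm] using hleaf.trans_lt hpos
  · have hcone : ∀ s, [j] <+: s → (s ∈ T ↔ s ∈ insert [m] T) := by
      refine fun s hs => ⟨Or.inr, fun hs' => hs'.resolve_left ?_⟩
      rintro rfl
      exact hm (hs.eq_of_length rfl ▸ hjT)
    rw [← treeRank_congr hwf hwf' hcone]
    exact treeRank_append_lt hwf hjT

theorem treeRank_diff_cone_nil {T : Set (List ℕ)} (hT : IsWFTree T) {m : ℕ}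
    (h : ∀ β < treeRank T [], ∃ j ≠ m, [j] ∈ T ∧ β < Order.succ (treeRank T [j])) :
    treeRank (T \ cone [m]) [] = treeRank T [] := by
  have hT' : IsWFTree (T \ cone [m]) := hT.mono (hT.1.diff_cone [m]) sdiff_subset
  have hwf := hT.wellFounded_childRel
  have hwf' := hT'.wellFounded_childRel
  refine le_antisymm (treeRank_le_of_forall_prefix_mem hwf' hwf fun s _ hs => hs.1)
    (le_of_forall_lt fun β hβ => ?_)
  obtain ⟨j, hjm, hjT, hβ⟩ := h β hβ
  have hcone : ∀ s, [j] <+: s → (s ∈ T ↔ s ∈ T \ cone [m]) := by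
    refine fun s hs => ⟨fun hsT => ⟨hsT, fun (hms : [m] <+: s) => hjm ?_⟩, fun hs' => hs'.1⟩
    rw [List.singleton_prefix_iff_head?_eq_some] at hs hms
    simpa [hs] using hms
  calc β < Order.succ (treeRank T [j]) := hβ
    _ = Order.succ (treeRank (T \ cone [m]) [j]) := by rw [treeRank_congr hwf hwf' hcone]
    _ ≤ treeRank (T \ cone [m]) [] :=
      Order.succ_le_of_lt (treeRank_append_lt hwf' ((hcone _ List.prefix_rfl).1 hjT))

theorem not_prefix_of_mem_seqBelow {n m : ℕ} (hnm : n ≤ m) {ν : List ℕ} (hν : ν ∈ seqBelow n) :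
    ¬ [m] <+: ν :=
  fun h => (hν.2 m (h.subset (List.mem_singleton_self m))).not_ge hnm

theorem mem_Unbhd_of_forall_not_prefix {α : Ordinal} {n m : ℕ} (hnm : n ≤ m) {T T' : ↥(Atree α)}
    (h : ∀ s, ¬ [m] <+: s → (s ∈ T.1 ↔ s ∈ T'.1)) : T' ∈ Unbhd α n T := by
  refine ⟨ext fun s => and_congr_left fun hs => (h s (not_prefix_of_mem_seqBelow hnm hs)).symm,
    fun ν hν => ?_⟩
  rcases eq_or_ne ν [] with rfl | hne
  · rw [T.2.2.2, T'.2.2.2]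
  · refine (treeRank_congr T.2.1.wellFounded_childRel T'.2.1.wellFounded_childRel
      fun s hs => h s fun hms => not_prefix_of_mem_seqBelow hnm hν.2 ?_).symm
    exact List.prefix_of_prefix_length_le hms hs (List.length_pos_of_ne_nil hne)

theorem exists_ne_mem_Unbhd_of_singleton_notMem {α : Ordinal} (hpos : 0 < α) (T : ↥(Atree α))
    {n m : ℕ} (hnm : n ≤ m) (hm : [m] ∉ T.1) : ∃ T' : ↥(Atree α), T' ≠ T ∧ T' ∈ Unbhd α n T := by
  obtain ⟨hT, hnil, hrank⟩ := T.2
  have hrank' := (treeRank_insert_singleton_nil hT hnil hm (by rwa [hrank])).trans hrank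
  refine ⟨⟨insert [m] T.1, hT.insert_singleton hnil m, Or.inr hnil, hrank'⟩,
    fun h => hm (by rw [← h]; exact mem_insert _ _),
    mem_Unbhd_of_forall_not_prefix hnm fun s hs => ⟨Or.inr, fun hs' => hs'.resolve_left ?_⟩⟩
  rintro rfl
  exact hs List.prefix_rfl

theorem exists_ne_mem_Unbhd_of_forall_singleton_mem {α : Ordinal} (T : ↥(Atree α)) {n : ℕ}
    (h : ∀ m, n ≤ m → [m] ∈ T.1) : ∃ T' : ↥(Atree α), T' ≠ T ∧ T' ∈ Unbhd α n T := by
  obtain ⟨hT, hnil, hrank⟩ := T.2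
  obtain ⟨⟨m, hmT⟩, hm, hsup⟩ := Ordinal.exists_forall_lt_iSup_exists_ne
    (f := fun j : {j // [] ++ [j] ∈ T.1} => Order.succ (treeRank T.1 ([] ++ [j.1])))
    (i₁ := ⟨n, h n le_rfl⟩) (i₂ := ⟨n + 1, h _ n.le_succ⟩) (by simp)
  have hnm : n ≤ m := by rcases hm with hm | hm <;> simp only [Subtype.mk.injEq] at hm <;> omega
  rw [← treeRank_eq_iSup hT.wellFounded_childRel] at hsup
  have hrank' : treeRank (T.1 \ cone [m]) [] = α := by
    refine (treeRank_diff_cone_nil hT fun β hβ => ?_).trans hrank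
    obtain ⟨⟨j, hjT⟩, hjm, hβj⟩ := hsup β hβ
    exact ⟨j, fun hjm' => hjm (Subtype.ext hjm'), hjT, hβj⟩
  refine ⟨⟨T.1 \ cone [m], hT.mono (hT.1.diff_cone [m]) sdiff_subset,
      ⟨hnil, fun h => List.cons_ne_nil _ _ (List.prefix_nil.mp h)⟩, hrank'⟩, fun h => ?_,
    mem_Unbhd_of_forall_not_prefix hnm fun s hs => ⟨fun hsT => ⟨hsT, hs⟩, And.left⟩⟩
  exact ((Set.ext_iff.mp (congrArg Subtype.val h) [m]).2 hmT).2 List.prefix_rfl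

theorem exists_ne_mem_Unbhd {α : Ordinal} (hpos : 0 < α) (n : ℕ) (T : ↥(Atree α)) :
    ∃ T' : ↥(Atree α), T' ≠ T ∧ T' ∈ Unbhd α n T := by
  by_cases h : ∃ m, n ≤ m ∧ [m] ∉ T.1
  · obtain ⟨m, hnm, hm⟩ := h
    exact exists_ne_mem_Unbhd_of_singleton_notMem hpos T hnm hm
  · exact exists_ne_mem_Unbhd_of_forall_singleton_mem T fun m hnm =>
      by_contra fun hm => h ⟨m, hnm, hm⟩

theorem seqBelow_mono : Monotone seqBelow :=
  fun _ _ hmn _ hl => ⟨hl.1.trans hmn, fun x hx => (hl.2 x hx).trans_le hmn⟩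

theorem Unbhd_anti (α : Ordinal) (T : ↥(Atree α)) : Antitone fun n => Unbhd α n T := by
  intro m n hmn T' ⟨hset, hrank⟩
  have hcap : ∀ X : Set (List ℕ), X ∩ seqBelow m = X ∩ seqBelow n ∩ seqBelow m := fun X => by
    rw [inter_assoc, inter_eq_right.mpr (seqBelow_mono hmn)]
  exact ⟨by rw [hcap T'.1, hcap T.1, hset], fun ν hν => hrank ν ⟨hν.1, seqBelow_mono hmn hν.2⟩⟩

theorem Unbhd_subset_of_mem {α : Ordinal} {n : ℕ} {T₀ T : ↥(Atree α)} (hT : T ∈ Unbhd α n T₀) :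
    Unbhd α n T ⊆ Unbhd α n T₀ := by
  intro T' hT'
  refine ⟨hT'.1.trans hT.1, fun ν hν => ?_⟩
  rw [hT'.2 ν (hT.1 ▸ hν), hT.2 ν hν]

theorem exists_Unbhd_subset_of_isOpen {α : Ordinal} {s : Set ↥(Atree α)}
    (hs : @IsOpen _ (tauTop α) s) {T : ↥(Atree α)} (hT : T ∈ s) : ∃ n, Unbhd α n T ⊆ s := by
  induction hs with
  | basic s hs =>
    obtain ⟨n, T₀, rfl⟩ := hs
    exact ⟨n, Unbhd_subset_of_mem hT⟩
  | univ => exact ⟨0, subset_univ _⟩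
  | inter s t _ _ ihs iht =>
    obtain ⟨n₁, h₁⟩ := ihs hT.1
    obtain ⟨n₂, h₂⟩ := iht hT.2
    exact ⟨max n₁ n₂, subset_inter ((Unbhd_anti α T (le_max_left _ _)).trans h₁)
      ((Unbhd_anti α T (le_max_right _ _)).trans h₂)⟩
  | sUnion S _ ih =>
    obtain ⟨s, hsS, hTs⟩ := hT
    obtain ⟨n, hn⟩ := ih s hsS hTs
    exact ⟨n, hn.trans (subset_sUnion_of_mem hsS)⟩

theorem stmt8_general (α : Ordinal) (hpos : 0 < α) :
    ∀ T : ↥(Atree α), ¬ @IsOpen ↥(Atree α) (tauTop α) {T} := by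
  intro T hopen
  obtain ⟨n, hn⟩ := exists_Unbhd_subset_of_isOpen hopen rfl
  obtain ⟨T', hne, hT'⟩ := exists_ne_mem_Unbhd hpos n T
  exact hne (mem_singleton_iff.mp (hn hT'))

/-- For every countable ordinal `α > 0`, the topology `τ_α` on `A_α` has no isolated
points: no singleton is τ_α-open. -/
theorem stmt8 (α : Ordinal) (hα : α.card ≤ Cardinal.aleph0) (hpos : 0 < α) :
    ∀ T : ↥(Atree α), ¬ @IsOpen ↥(Atree α) (tauTop α) {T} :=
  stmt8_general α hpos
end

section
/- The σ-ideal I* on Tr satisfies the ω₂-chain condition: every pairwise disjoint family of Borel subsets of Tr none of which belongs to I* has cardinality at most ℵ₁. -/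
open Set MeasureTheory

/-- The standard (product) topology on `2^{ω^{<ω}}`, i.e. on `Set (List ℕ)`:
generated by the subbasic clopen cylinders `{T | l ∈ T}` and `{T | l ∉ T}`. -/
def cylTop : TopologicalSpace (Set (List ℕ)) :=
  TopologicalSpace.generateFrom
    ({s | ∃ l : List ℕ, s = {T : Set (List ℕ) | l ∈ T}} ∪
     {s | ∃ l : List ℕ, s = {T : Set (List ℕ) | l ∉ T}})

/-- The Polish space `Tr` of all subtrees of `ω^{<ω}`. -/
def Tr : Type := {T : Set (List ℕ) // IsTree T}

/-- The standard topology of `Tr`: the subspace topology from `2^{ω^{<ω}}`. -/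
def trTop : TopologicalSpace Tr := TopologicalSpace.induced Subtype.val cylTop

/-- The copy in `A_α` of a set `B ⊆ Tr`, i.e. the set `B ∩ A_α` viewed as a subset of
the space `⟨A_α, τ_α⟩`. -/
def restrictA (α : Ordinal) (B : Set Tr) : Set ↥(Atree α) :=
  {T | (⟨T.1, T.2.1.1⟩ : Tr) ∈ B}

/-- The σ-ideal `I*` on `Tr`: `E ∈ I*` iff there is a Borel set `B ⊇ E` (in the
standard topology of `Tr`) such that `B ∩ A_α` is τ_α-meager for every countable
ordinal `α > 0`. -/
def memIstar (E : Set Tr) : Prop :=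
  ∃ B : Set Tr, E ⊆ B ∧ MeasurableSet[@borel Tr trTop] B ∧
    ∀ α : Ordinal, 0 < α → α.card ≤ Cardinal.aleph0 →
      @IsMeagre ↥(Atree α) (tauTop α) (restrictA α B)

/-!
For a countable `α > 0` the topology `τ_α` is second countable: the basic set `U(n,T)` is the
fibre through `T` of the map recording which sequences of `n^{≤n}` lie in `T` and with which
ranks (all `≤ α`), and this map has countably many values. Its preimages are therefore open, and
membership of a fixed sequence is read off it, so the inclusion `A_α → Tr` is continuous and
`B ∩ A_α` is Baire measurable for Borel `B`. If `B ∉ I*`, some `B ∩ A_α` is not meagre, hence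
is comeagre in a non-meagre basic set `V`. Two disjoint sets cannot both be comeagre in `V`, so
on a disjoint family `B ↦ (α, V)` is injective, and there are at most `ℵ₁ · ℵ₀` such pairs.
-/

open Cardinal TopologicalSpace Function

theorem Ordinal.countable_Iic_of_card_le_aleph0 {α : Ordinal} (h : α.card ≤ ℵ₀) :
    (Iic α).Countable := by
  rw [← Iio_insert, countable_insert, ← le_aleph0_iff_set_countable, Cardinal.mk_Iio_ordinal,
    lift_le_aleph0]
  exact h

theorem Ordinal.mk_setOf_card_le_aleph0_le_aleph_one : #{α : Ordinal.{u} | α.card ≤ ℵ₀} ≤ ℵ₁ := by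
  calc #{α : Ordinal.{u} | α.card ≤ ℵ₀} ≤ #(Iio (ℵ₁ : Cardinal.{u}).ord) := by
        refine mk_le_mk_of_subset fun α hα => ?_
        rw [mem_Iio, lt_ord, ← succ_aleph0, Order.lt_succ_iff]
        exact hα
    _ = ℵ₁ := by simp [Cardinal.mk_Iio_ordinal]

theorem Cardinal.mk_sigma_le_of_countable {ι : Type u} (β : ι → Type v) [∀ i, Countable (β i)] :
    #(Σ i, β i) ≤ lift.{v} #ι * ℵ₀ :=
  calc #(Σ i, β i) ≤ sum fun _ : ι => ℵ₀ := mk_sigma β ▸ sum_le_sum _ _ fun _ => mk_le_aleph0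
    _ = lift.{v} #ι * ℵ₀ := by simp

theorem IsMeagre.of_diff_of_disjoint {X : Type*} [TopologicalSpace X] {s t V : Set X}
    (hst : Disjoint s t) (hs : IsMeagre (V \ s)) (ht : IsMeagre (V \ t)) : IsMeagre V :=
  (hs.union ht).mono (by rw [← sdiff_inter, hst.inter_eq, sdiff_empty])

theorem BaireMeasurableSet.exists_mem_basis_not_isMeagre_diff {X : Type*} [TopologicalSpace X]
    {𝓑 : Set (Set X)} (h𝓑 : IsTopologicalBasis 𝓑) (hc : 𝓑.Countable) {s : Set X}
    (hs : BaireMeasurableSet s) (hns : ¬ IsMeagre s) :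
    ∃ V ∈ 𝓑, ¬ IsMeagre V ∧ IsMeagre (V \ s) := by
  obtain ⟨u, hu, hsu⟩ := hs.residualEq_isOpen
  have hsu' : ∀ᶠ x in residual X, x ∈ s ↔ x ∈ u := Filter.eventuallyEq_set.1 hsu
  have hus : IsMeagre (u \ s) := hsu'.mono fun x hx hxu => hxu.2 (hx.2 hxu.1)
  have hsu : IsMeagre (s \ u) := hsu'.mono fun x hx hxs => hxs.2 (hx.1 hxs.1)
  have hu_nm : ¬ IsMeagre u := fun h => hns ((hsu.union h).mono (subset_sdiff_union s u))
  obtain ⟨S, hS𝓑, rfl⟩ := h𝓑.open_eq_sUnion hu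
  obtain ⟨V, hVS, hV⟩ : ∃ V ∈ S, ¬ IsMeagre V := by
    by_contra! h
    exact hu_nm (isMeagre_biUnion (hc.mono hS𝓑) h |>.mono (sUnion_eq_biUnion).le)
  exact ⟨V, hS𝓑 hVS, hV, hus.mono (sdiff_subset_sdiff_left (subset_sUnion_of_mem hVS))⟩

theorem seqBelow_finite (n : ℕ) : (seqBelow n).Finite := by
  refine ((List.finite_length_le (Fin n) n).image (List.map Fin.val)).subset ?_
  rintro l ⟨hlen, hlt⟩
  lift l to List (Fin n) using hlt
  exact ⟨l, by simpa using hlen, rfl⟩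

theorem seqBelow_mono_s11 {n m : ℕ} (h : n ≤ m) : seqBelow n ⊆ seqBelow m :=
  fun _ hl => ⟨hl.1.trans h, fun x hx => (hl.2 x hx).trans_le h⟩

theorem mem_seqBelow_length_add_sum (l : List ℕ) : l ∈ seqBelow (l.length + l.sum + 1) :=
  ⟨by omega, fun x hx => by have := List.le_sum_of_mem hx; omega⟩

theorem treeRank_le_treeRank_nil {T : Set (List ℕ)} (hT : IsTree T) {ν : List ℕ} (hν : ν ∈ T) :
    treeRank T ν ≤ treeRank T [] := by
  unfold treeRank
  split_ifs with h
  · induction ν using List.reverseRecOn with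
    | nil => exact le_rfl
    | append_singleton t m ih =>
      exact ((h.apply t).rank_lt_of_rel ⟨hν, m, rfl⟩).le.trans (ih (hT _ hν t ⟨[m], rfl⟩))
  · exact le_rfl

attribute [local instance] tauTop trTop

section RankTrace

variable {α : Ordinal} {n : ℕ}

theorem self_mem_Unbhd {T : Atree α} : T ∈ Unbhd α n T := ⟨rfl, fun _ _ => rfl⟩

open scoped Classical in
noncomputable def rankTrace (α : Ordinal) (n : ℕ) (T : Atree α) : seqBelow n → Option (Iic α) :=
  fun ν => if h : ν.1 ∈ T.1 then
    some ⟨treeRank T.1 ν, (treeRank_le_treeRank_nil T.2.1.1 h).trans_eq T.2.2.2⟩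
  else none

theorem rankTrace_eq_iff {S T : Atree α} :
    rankTrace α n S = rankTrace α n T ↔ S.1 ∩ seqBelow n = T.1 ∩ seqBelow n ∧
      ∀ ν ∈ T.1 ∩ seqBelow n, treeRank S.1 ν = treeRank T.1 ν := by
  simp only [funext_iff, Subtype.forall, rankTrace, Set.ext_iff, mem_inter_iff]
  constructor
  · intro h
    refine ⟨fun ν => ⟨fun ⟨hS, hν⟩ => ⟨?_, hν⟩, fun ⟨hT, hν⟩ => ⟨?_, hν⟩⟩, fun ν ⟨hT, hν⟩ => ?_⟩
    all_goals (have := h ν hν; split_ifs at this; simp_all [Subtype.ext_iff])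
  · rintro ⟨h1, h2⟩ ν hν
    by_cases hT : ν ∈ T.1
    · simp [hT, (h1 ν).2 ⟨hT, hν⟩, h2 ν ⟨hT, hν⟩]
    · have hS : ν ∉ S.1 := fun hS => hT ((h1 ν).1 ⟨hS, hν⟩).1
      simp [hT, hS]

theorem Unbhd_eq_preimage_rankTrace (T : Atree α) :
    Unbhd α n T = rankTrace α n ⁻¹' {rankTrace α n T} := by
  ext S
  exact rankTrace_eq_iff.symm

theorem rankTrace_eq_of_le {m : ℕ} (h : n ≤ m) {S T : Atree α}
    (hST : rankTrace α m S = rankTrace α m T) : rankTrace α n S = rankTrace α n T :=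
  funext fun ν => congrFun hST ⟨ν.1, seqBelow_mono_s11 h ν.2⟩

theorem isOpen_preimage_rankTrace (s : Set (seqBelow n → Option (Iic α))) :
    IsOpen (rankTrace α n ⁻¹' s) := by
  have : rankTrace α n ⁻¹' s = ⋃ T ∈ rankTrace α n ⁻¹' s, Unbhd α n T := by
    simp_rw [Unbhd_eq_preimage_rankTrace]
    ext S
    simp only [mem_iUnion, mem_preimage, mem_singleton_iff, exists_prop]
    exact ⟨fun hS => ⟨S, hS, rfl⟩, fun ⟨T, hT, hST⟩ => hST ▸ hT⟩
  rw [this]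
  exact isOpen_biUnion fun T _ => isOpen_generateFrom_of_mem ⟨n, T, rfl⟩

theorem setOf_mem_eq_preimage_rankTrace (l : List ℕ) :
    {T : Atree α | l ∈ T.1} = rankTrace α _ ⁻¹'
      {f | (f ⟨l, mem_seqBelow_length_add_sum l⟩).isSome} := by
  ext T
  by_cases hl : l ∈ T.1 <;> simp [rankTrace, hl]

end RankTrace

def basicOpens (α : Ordinal) : Set (Set (Atree α)) := {s | ∃ n T, s = Unbhd α n T}

theorem isTopologicalBasis_basicOpens (α : Ordinal) :
    IsTopologicalBasis (basicOpens α) := by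
  refine ⟨?_, sUnion_eq_univ_iff.2 fun T => ⟨_, ⟨0, T, rfl⟩, self_mem_Unbhd⟩, rfl⟩
  rintro _ ⟨n₁, T₁, rfl⟩ _ ⟨n₂, T₂, rfl⟩ x ⟨hx₁, hx₂⟩
  refine ⟨Unbhd α (max n₁ n₂) x, ⟨_, x, rfl⟩, self_mem_Unbhd, ?_⟩
  simp only [Unbhd_eq_preimage_rankTrace, mem_preimage, mem_singleton_iff] at hx₁ hx₂ ⊢
  exact fun S hS => ⟨(rankTrace_eq_of_le (le_max_left _ _) hS).trans hx₁,
    (rankTrace_eq_of_le (le_max_right _ _) hS).trans hx₂⟩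

theorem countable_basicOpens {α : Ordinal} (hα : α.card ≤ ℵ₀) :
    (basicOpens α).Countable := by
  have : Countable (Iic α) := (Ordinal.countable_Iic_of_card_le_aleph0 hα).to_subtype
  have (n : ℕ) : Finite (seqBelow n) := (seqBelow_finite n).to_subtype
  refine (countable_iUnion fun n => countable_range fun f => rankTrace α n ⁻¹' {f}).mono ?_
  rintro _ ⟨n, T, rfl⟩
  exact mem_iUnion.2 ⟨n, _, (Unbhd_eq_preimage_rankTrace T).symm⟩

def Atree.toTr (α : Ordinal) (T : Atree α) : Tr := ⟨T.1, T.2.1.1⟩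

theorem Atree.continuous_toTr (α : Ordinal) : Continuous (Atree.toTr α) := by
  refine continuous_induced_rng.2 (continuous_generateFrom_iff.2 ?_)
  rintro _ (⟨l, rfl⟩ | ⟨l, rfl⟩)
  · show IsOpen {T : Atree α | l ∈ T.1}
    rw [setOf_mem_eq_preimage_rankTrace]
    exact isOpen_preimage_rankTrace _
  · show IsOpen {T : Atree α | l ∈ T.1}ᶜ
    rw [setOf_mem_eq_preimage_rankTrace, ← preimage_compl]
    exact isOpen_preimage_rankTrace _

theorem baireMeasurableSet_restrictA {B : Set Tr} (hB : MeasurableSet[borel Tr] B) (α : Ordinal) :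
    BaireMeasurableSet (restrictA α B) := by
  borelize Tr ↥(Atree α)
  exact ((Atree.continuous_toTr α).measurable hB).baireMeasurableSet

theorem exists_basicOpens_not_isMeagre_diff {B : Set Tr} (hB : MeasurableSet[borel Tr] B)
    (hBI : ¬ memIstar B) : ∃ α : Ordinal, (0 < α ∧ α.card ≤ ℵ₀) ∧
      ∃ V ∈ basicOpens α, ¬ IsMeagre V ∧ IsMeagre (V \ restrictA α B) := by
  obtain ⟨α, hα, hαc, hnm⟩ : ∃ α : Ordinal, 0 < α ∧ α.card ≤ ℵ₀ ∧ ¬ IsMeagre (restrictA α B) := by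
    by_contra! h
    exact hBI ⟨B, subset_rfl, hB, h⟩
  exact ⟨α, ⟨hα, hαc⟩, (baireMeasurableSet_restrictA hB α).exists_mem_basis_not_isMeagre_diff
    (isTopologicalBasis_basicOpens α) (countable_basicOpens hαc) hnm⟩

/-- `I*` satisfies the `ω₂`-chain condition: every pairwise disjoint family of Borel
subsets of `Tr` none of which belongs to `I*` has cardinality at most `ℵ₁`. -/
theorem stmt11 (F : Set (Set Tr)) (hdisj : F.PairwiseDisjoint id)
    (hF : ∀ B ∈ F, MeasurableSet[@borel Tr trTop] B ∧ ¬ memIstar B) :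
    Cardinal.mk F ≤ Cardinal.aleph 1 := by
  let I := {α : Ordinal | 0 < α ∧ α.card ≤ ℵ₀}
  have (α : I) : Countable (basicOpens α) := (countable_basicOpens α.2.2).to_subtype
  have key (B : F) : ∃ c : Σ α : I, basicOpens α,
      ¬ IsMeagre c.2.1 ∧ IsMeagre (c.2.1 \ restrictA c.1 B) := by
    obtain ⟨α, hα, V, hV, hVB⟩ := exists_basicOpens_not_isMeagre_diff (hF B B.2).1 (hF B B.2).2
    exact ⟨⟨⟨α, hα⟩, V, hV⟩, hVB⟩
  choose c hc using key
  have hinj : Injective c := fun B₁ B₂ h => by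
    by_contra hne
    refine (hc B₁).1 (IsMeagre.of_diff_of_disjoint ?_ (hc B₁).2 (h ▸ (hc B₂).2))
    exact (hdisj B₁.2 B₂.2 (Subtype.coe_ne_coe.2 hne)).preimage _
  have : lift.{1} #F ≤ lift.{1} (ℵ₁ : Cardinal.{0}) :=
    calc lift.{1} #F ≤ #(Σ α : I, basicOpens α) := by
          simpa using lift_mk_le_lift_mk_of_injective hinj
      _ ≤ lift.{0} #I * ℵ₀ := mk_sigma_le_of_countable _
      _ ≤ (ℵ₁ : Cardinal.{1}) * ℵ₀ := by
          gcongr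
          simpa using (mk_le_mk_of_subset fun α (hα : α ∈ I) => hα.2).trans
            Ordinal.mk_setOf_card_le_aleph0_le_aleph_one
      _ = lift.{1} (ℵ₁ : Cardinal.{0}) := by simp
  exact lift_le.1 this
end

section
/- The ideal I has property (M*) if and only if there exists a Borel measurable function f : X → X such that the intersection ⋂_{n∈ℕ} H_n(f) contains a nonempty perfect subset of X. -/
open Set MeasureTheory

/-- `I` has property (M) relative to `E ⊆ X`: there is a Borel measurable function
`f : E → X` all of whose fibers (as subsets of `X`) are outside `I`. -/
def MRel {X : Type*} [TopologicalSpace X] [MeasurableSpace X]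
    (I : Set (Set X)) (E : Set X) : Prop :=
  ∃ f : ↥E → X, Measurable f ∧ ∀ x : X, (Subtype.val '' (f ⁻¹' {x})) ∉ I

/-- `I` has property (M'_x): it has property (M) relative to every open
neighborhood of `x`. -/
def MPrimeAt {X : Type*} [TopologicalSpace X] [MeasurableSpace X]
    (I : Set (Set X)) (x : X) : Prop :=
  ∀ U : Set X, IsOpen U → x ∈ U → MRel I U

/-- `H_n(f) = {y ∈ X : U n ∩ f⁻¹[{y}] ∉ I}`. -/
def Hset {X : Type*} (I : Set (Set X)) (U : ℕ → Set X) (f : X → X) (n : ℕ) : Set X :=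
  {y | U n ∩ f ⁻¹' {y} ∉ I}

/-!
If the fibers of `f` are `I`-positive on every nonempty open set, then every point lies in
`⋂ n, H_n(f)`, and an uncountable Polish space contains a nonempty perfect set.
Conversely, a nonempty perfect set `P` contains a homeomorphic copy of the Cantor space, which is
Borel isomorphic to `X`; extending this isomorphism gives a Borel `φ : X → X` mapping `P` onto `X`.
Each fiber of `φ ∘ f` then contains a fiber of `f` over a point of `P`, which is `I`-positive on
every basic open set.
-/

theorem Perfect.exists_measurable_surjOn {X Y : Type*} [TopologicalSpace X] [PolishSpace X]
    [MeasurableSpace X] [BorelSpace X] [MeasurableSpace Y] [StandardBorelSpace Y]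
    [Uncountable Y] {P : Set X} (hP : Perfect P) (hne : P.Nonempty) :
    ∃ φ : X → Y, Measurable φ ∧ SurjOn φ P univ := by
  obtain ⟨e, heP, he_cont, he_inj⟩ : ∃ e : (ℕ → Bool) → X, range e ⊆ P ∧ Continuous e ∧
      Function.Injective e := by
    let := TopologicalSpace.upgradeIsCompletelyMetrizable X
    exact hP.exists_nat_bool_injection hne
  let m : (ℕ → Bool) ≃ᵐ Y :=
    (PolishSpace.measurableEquivNatBoolOfNotCountable not_countable).symm
  obtain ⟨φ, hφ, hφe⟩ := (he_cont.isClosedEmbedding he_inj).measurableEmbedding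
    |>.exists_measurable_extend m.measurable fun _ => inferInstance
  refine ⟨φ, hφ, fun y _ => ⟨e (m.symm y), heP (mem_range_self _), ?_⟩⟩
  rw [← Function.comp_apply (f := φ), hφe]
  exact m.apply_symm_apply y

theorem iInter_Hset_eq_univ {X : Type*} [TopologicalSpace X] (I : Set (Set X))
    (U : ℕ → Set X) (hU_open : ∀ n, IsOpen (U n)) (hU_ne : ∀ n, (U n).Nonempty) {f : X → X}
    (hf : ∀ (x : X) (V : Set X), IsOpen V → V.Nonempty → f ⁻¹' {x} ∩ V ∉ I) :
    ⋂ n, Hset I U f n = univ :=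
  eq_univ_of_forall fun y => mem_iInter.2 fun n => by
    simpa only [Hset, mem_ofPred_eq, inter_comm] using hf y (U n) (hU_open n) (hU_ne n)

theorem preimage_comp_inter_notMem_of_surjOn_iInter_Hset {X : Type*} [TopologicalSpace X]
    (I : Set (Set X)) (hsub : ∀ A B : Set X, A ⊆ B → B ∈ I → A ∈ I) (U : ℕ → Set X)
    (hbasis : TopologicalSpace.IsTopologicalBasis (range U)) {f φ : X → X}
    (hφ : SurjOn φ (⋂ n, Hset I U f n) univ) (x : X) (V : Set X) (hV : IsOpen V)
    (hV_ne : V.Nonempty) : (φ ∘ f) ⁻¹' {x} ∩ V ∉ I := by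
  obtain ⟨v, hv⟩ := hV_ne
  obtain ⟨-, ⟨n, rfl⟩, -, hUV⟩ := hbasis.exists_subset_of_mem_open hv hV
  obtain ⟨y, hyH, rfl⟩ := hφ (mem_univ x)
  refine fun hI => mem_iInter.1 hyH n (hsub _ _ ?_ hI)
  rintro z ⟨hzU, hfz⟩
  exact ⟨congrArg φ hfz, hUV hzU⟩

theorem stmt18_general {X : Type*} [TopologicalSpace X] [PolishSpace X]
    [MeasurableSpace X] [BorelSpace X] [Uncountable X]
    (I : Set (Set X))
    (hsub : ∀ A B : Set X, A ⊆ B → B ∈ I → A ∈ I)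
    (U : ℕ → Set X) (hbasis : TopologicalSpace.IsTopologicalBasis (Set.range U))
    (hUne : ∀ n, (U n).Nonempty) :
    (∃ f : X → X, Measurable f ∧
        ∀ (x : X) (V : Set X), IsOpen V → V.Nonempty → f ⁻¹' {x} ∩ V ∉ I) ↔
      ∃ f : X → X, Measurable f ∧
        ∃ P : Set X, P ⊆ (⋂ n, Hset I U f n) ∧ Perfect P ∧ P.Nonempty := by
  constructor
  · rintro ⟨f, hf, hfib⟩
    obtain ⟨P, hP, hP_ne, -⟩ :=
      exists_perfect_nonempty_of_isClosed_of_not_countable (isClosed_univ (X := X))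
        not_countable_univ
    refine ⟨f, hf, P, ?_, hP, hP_ne⟩
    rw [iInter_Hset_eq_univ I U (fun n => hbasis.isOpen ⟨n, rfl⟩) hUne hfib]
    exact subset_univ P
  · rintro ⟨f, hf, P, hPH, hP, hP_ne⟩
    obtain ⟨φ, hφ, hφP⟩ := hP.exists_measurable_surjOn (Y := X) hP_ne
    exact ⟨φ ∘ f, hφ.comp hf,
      preimage_comp_inter_notMem_of_surjOn_iInter_Hset I hsub U hbasis (hφP.mono hPH subset_rfl)⟩

/-- Let `X` be an uncountable Polish space, `I` an ideal on `X` containing no nonempty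
open set, and `{U n}` a countable base of nonempty open sets.  Then `I` has property
(M*) — there is a Borel `f : X → X` with `f⁻¹[{x}] ∩ V ∉ I` for every `x` and every
nonempty open `V` — iff there is a Borel function `f : X → X` such that `⋂ n, H_n(f)`
contains a nonempty perfect set. -/
theorem stmt18 {X : Type*} [TopologicalSpace X] [PolishSpace X]
    [MeasurableSpace X] [BorelSpace X] [Uncountable X]
    (I : Set (Set X))
    (hsub : ∀ A B : Set X, A ⊆ B → B ∈ I → A ∈ I)
    (hun : ∀ A B : Set X, A ∈ I → B ∈ I → A ∪ B ∈ I)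
    (hopen : ∀ V : Set X, IsOpen V → V.Nonempty → V ∉ I)
    (U : ℕ → Set X) (hbasis : TopologicalSpace.IsTopologicalBasis (Set.range U))
    (hUne : ∀ n, (U n).Nonempty) :
    (∃ f : X → X, Measurable f ∧
        ∀ (x : X) (V : Set X), IsOpen V → V.Nonempty → f ⁻¹' {x} ∩ V ∉ I) ↔
      ∃ f : X → X, Measurable f ∧
        ∃ P : Set X, P ⊆ (⋂ n, Hset I U f n) ∧ Perfect P ∧ P.Nonempty :=
  stmt18_general I hsub U hbasis hUne
end
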